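/- Among all tetrahedra with a fixed sum S > 0 of the six squared edge lengths, the volume is at most S^{3/2}/(72√3); equivalently 72√3·|K| ≤ (Σ_{i=1}^{6} s(e_i)^2)^{3/2} for every tetrahedron K. -/
import Mathlib

set_option maxHeartbeats 1000000

lemma amgm3 (x y z : ℝ) (hx : 0 ≤ x) (hy : 0 ≤ y) (hz : 0 ≤ z) :
    27 * (x * y * z) ≤ (x + y + z) ^ 3 := by
  nlinarith [sq_nonneg (x - y), sq_nonneg (y - z), sq_nonneg (x - z),
    mul_nonneg hx hy, mul_nonneg hy hz, mul_nonneg hx hz,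
    mul_nonneg (mul_nonneg hx hy) hz]

lemma had3 (a1 a2 a3 b1 b2 b3 c1 c2 c3 : ℝ) :
    (a1*(b2*c3) - a1*(b3*c2) - a2*(b1*c3) + a2*(b3*c1) + a3*(b1*c2) - a3*(b2*c1))^2
      ≤ (a1^2+a2^2+a3^2) * (b1^2+b2^2+b3^2) * (c1^2+c2^2+c3^2) := by
  have hCS : (( a2*b3 - a3*b2)*c1 + (a3*b1 - a1*b3)*c2 + (a1*b2 - a2*b1)*c3)^2
      ≤ ((a2*b3 - a3*b2)^2 + (a3*b1 - a1*b3)^2 + (a1*b2 - a2*b1)^2) * (c1^2+c2^2+c3^2) := by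
    nlinarith [sq_nonneg ((a2*b3 - a3*b2)*c2 - (a3*b1 - a1*b3)*c1),
      sq_nonneg ((a2*b3 - a3*b2)*c3 - (a1*b2 - a2*b1)*c1),
      sq_nonneg ((a3*b1 - a1*b3)*c3 - (a1*b2 - a2*b1)*c2)]
  have hLag : (a2*b3 - a3*b2)^2 + (a3*b1 - a1*b3)^2 + (a1*b2 - a2*b1)^2
      ≤ (a1^2+a2^2+a3^2) * (b1^2+b2^2+b3^2) := by
    nlinarith [sq_nonneg (a1*b1 + a2*b2 + a3*b3)]
  have hc : (0:ℝ) ≤ c1^2+c2^2+c3^2 := by positivity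
  nlinarith [hCS, mul_le_mul_of_nonneg_right hLag hc]

lemma combine (X Y Z D S : ℝ) (hX : 0 ≤ X) (hY : 0 ≤ Y) (hZ : 0 ≤ Z)
    (h2 : (108*D)^2 ≤ X*Y*Z) (hsum : X + Y + Z = 9*S) :
    432 * D^2 ≤ S^3 := by
  have hAM := amgm3 X Y Z hX hY hZ
  rw [hsum] at hAM
  nlinarith [h2, hAM]

lemma key (u1 u2 u3 v1 v2 v3 w1 w2 w3 D S : ℝ)
    (hD : D = u1*(v2*w3) - u1*(v3*w2) - u2*(v1*w3) + u2*(v3*w1) + u3*(v1*w2) - u3*(v2*w1))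
    (hS : S = (u1^2+u2^2+u3^2) + (v1^2+v2^2+v3^2) + (w1^2+w2^2+w3^2)
         + ((u1-v1)^2+(u2-v2)^2+(u3-v3)^2)
         + ((u1-w1)^2+(u2-w2)^2+(u3-w3)^2)
         + ((v1-w1)^2+(v2-w2)^2+(v3-w3)^2)) :
    432 * D^2 ≤ S^3 := by
  refine combine ((5*u1-v1-w1)^2+(5*u2-v2-w2)^2+(5*u3-v3-w3)^2)
      ((5*v1-u1-w1)^2+(5*v2-u2-w2)^2+(5*v3-u3-w3)^2)
      ((5*w1-u1-v1)^2+(5*w2-u2-v2)^2+(5*w3-u3-v3)^2) D S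
      (by positivity) (by positivity) (by positivity) ?_ (by rw [hS]; ring)
  refine le_trans (le_of_eq ?_) (had3 (5*u1-v1-w1) (5*u2-v2-w2) (5*u3-v3-w3)
    (5*v1-u1-w1) (5*v2-u2-w2) (5*v3-u3-w3)
    (5*w1-u1-v1) (5*w2-u2-v2) (5*w3-u3-v3))
  rw [hD]; ring

noncomputable def tetVol (a b c d : EuclideanSpace ℝ (Fin 3)) : ℝ :=
  |Matrix.det (Matrix.of ![fun i => (b - a) i, fun i => (c - a) i, fun i => (d - a) i])| / 6

noncomputable def edgeSq (a b c d : EuclideanSpace ℝ (Fin 3)) : ℝ :=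
  dist a b ^ 2 + dist a c ^ 2 + dist a d ^ 2 + dist b c ^ 2 + dist b d ^ 2 + dist c d ^ 2

noncomputable def tetQ (a b c d : EuclideanSpace ℝ (Fin 3)) : ℝ :=
  if edgeSq a b c d = 0 then 0
  else 72 * Real.sqrt 3 * tetVol a b c d / (edgeSq a b c d) ^ ((3:ℝ)/2)

lemma dist_sq_expand (x y : EuclideanSpace ℝ (Fin 3)) :
    dist x y ^ 2 = (x 0 - y 0)^2 + (x 1 - y 1)^2 + (x 2 - y 2)^2 := by
  rw [EuclideanSpace.dist_eq, Real.sq_sqrt (by positivity)]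
  simp [Fin.sum_univ_three, Real.dist_eq, sq_abs]

theorem tet_isoperimetric (a b c d : EuclideanSpace ℝ (Fin 3)) :
    72 * Real.sqrt 3 * tetVol a b c d ≤ (edgeSq a b c d) ^ ((3:ℝ)/2) := by
  have hS0 : 0 ≤ edgeSq a b c d := by
    unfold edgeSq; positivity
  have hD : Matrix.det (Matrix.of ![fun i => (b - a) i, fun i => (c - a) i, fun i => (d - a) i])
      = (b 0 - a 0)*((c 1 - a 1)*(d 2 - a 2)) - (b 0 - a 0)*((c 2 - a 2)*(d 1 - a 1))
        - (b 1 - a 1)*((c 0 - a 0)*(d 2 - a 2)) + (b 1 - a 1)*((c 2 - a 2)*(d 0 - a 0))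
        + (b 2 - a 2)*((c 0 - a 0)*(d 1 - a 1)) - (b 2 - a 2)*((c 1 - a 1)*(d 0 - a 0)) := by
    rw [Matrix.det_fin_three]
    simp only [Matrix.of_apply, Matrix.cons_val', Matrix.cons_val_zero, Matrix.cons_val_one,
      Matrix.head_cons, Matrix.empty_val', Matrix.cons_val_fin_one, Matrix.head_fin_const,
      Matrix.cons_val_two, Matrix.tail_cons, PiLp.sub_apply]
    ring
  have hS : edgeSq a b c d
      = (((b 0 - a 0)^2+(b 1 - a 1)^2+(b 2 - a 2)^2)
        + ((c 0 - a 0)^2+(c 1 - a 1)^2+(c 2 - a 2)^2)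
        + ((d 0 - a 0)^2+(d 1 - a 1)^2+(d 2 - a 2)^2)
        + (((b 0 - a 0)-(c 0 - a 0))^2+((b 1 - a 1)-(c 1 - a 1))^2+((b 2 - a 2)-(c 2 - a 2))^2)
        + (((b 0 - a 0)-(d 0 - a 0))^2+((b 1 - a 1)-(d 1 - a 1))^2+((b 2 - a 2)-(d 2 - a 2))^2)
        + (((c 0 - a 0)-(d 0 - a 0))^2+((c 1 - a 1)-(d 1 - a 1))^2+((c 2 - a 2)-(d 2 - a 2))^2)) := by
    unfold edgeSq
    rw [dist_sq_expand a b, dist_sq_expand a c, dist_sq_expand a d,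
      dist_sq_expand b c, dist_sq_expand b d, dist_sq_expand c d]
    ring
  have h := key (b 0 - a 0) (b 1 - a 1) (b 2 - a 2) (c 0 - a 0) (c 1 - a 1) (c 2 - a 2)
    (d 0 - a 0) (d 1 - a 1) (d 2 - a 2)
    (Matrix.det (Matrix.of ![fun i => (b - a) i, fun i => (c - a) i, fun i => (d - a) i]))
    (edgeSq a b c d) hD hS
  have hrw : (edgeSq a b c d) ^ ((3:ℝ)/2) = Real.sqrt (edgeSq a b c d ^ 3) := by
    rw [Real.sqrt_eq_rpow, ← Real.rpow_natCast (edgeSq a b c d) 3, ← Real.rpow_mul hS0]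
    norm_num
  rw [hrw]
  have hL : 0 ≤ 72 * Real.sqrt 3 * tetVol a b c d := by
    unfold tetVol
    positivity
  rw [Real.le_sqrt hL (by positivity)]
  have h3 : Real.sqrt 3 ^ 2 = 3 := Real.sq_sqrt (by norm_num)
  unfold tetVol
  calc (72 * Real.sqrt 3 * (|Matrix.det (Matrix.of ![fun i => (b - a) i, fun i => (c - a) i,
        fun i => (d - a) i])| / 6)) ^ 2
      = 432 * (Matrix.det (Matrix.of ![fun i => (b - a) i, fun i => (c - a) i,
        fun i => (d - a) i])) ^ 2 := by
        rw [mul_pow, mul_pow, h3, div_pow, sq_abs]; ring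
    _ ≤ (edgeSq a b c d) ^ 3 := h
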